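/- Let E = ℂ and F = ℝ with complex conjugation. Every g ∈ GL_n(ℂ) with g ḡ = I_n can be written g = h h̄⁻¹ for some h ∈ GL_n(ℂ). -/

import Mathlib

/-!
For a scalar `a`, the matrix `h = a • 1 + ā • g` satisfies `g h̄ = ā g + a g ḡ = h` as soon as
`g ḡ = 1`, so `g = h h̄⁻¹` whenever `h` is invertible. Taking `a = 1 + i t` with `t` real,
`det h` is a polynomial in `t`; it is not the zero polynomial because at `t = i` the matrix
`h` becomes `2 g`. Hence it vanishes at only finitely many `t`, and some real `t` works.
-/

open Polynomial

namespace Matrix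

variable {n : Type*} [DecidableEq n]

theorem eval_det_map_C_add_X_smul [Fintype n] {K : Type*} [CommRing K] (A B : Matrix n n K)
    (s : K) :
    (A.map C + (X : K[X]) • B.map C).det.eval s = (A + s • B).det := by
  rw [← coe_evalRingHom, RingHom.map_det]
  congr 1
  ext i j
  simp [mul_comm _ s]

theorem exists_mem_det_add_smul_ne_zero [Fintype n] {K : Type*} [Field K] (A B : Matrix n n K)
    {S : Set K} (hS : S.Infinite) {s₀ : K} (hs₀ : (A + s₀ • B).det ≠ 0) :
    ∃ s ∈ S, (A + s • B).det ≠ 0 := by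
  have hp : (A.map C + (X : K[X]) • B.map C).det ≠ 0 := fun hp ↦
    hs₀ (by rw [← eval_det_map_C_add_X_smul, hp, eval_zero])
  obtain ⟨s, hsS, hs⟩ := (hS.sdiff (finite_setOfPred_isRoot hp)).nonempty
  exact ⟨s, hsS, by simpa [eval_det_map_C_add_X_smul] using hs⟩

section StarRing

variable {K : Type*} [CommRing K] [StarRing K]

theorem map_star_smul_one_add_star_smul (a : K) (g : Matrix n n K) :
    (a • 1 + star a • g).map (starRingEnd K) = star a • 1 + a • g.map (starRingEnd K) := by
  ext i j
  simp [one_apply, apply_ite star, starRingEnd_apply]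

theorem mul_map_star_smul_one_add_star_smul [Fintype n] {g : Matrix n n K}
    (hg : g * g.map (starRingEnd K) = 1) (a : K) :
    g * (a • 1 + star a • g).map (starRingEnd K) = a • 1 + star a • g := by
  rw [map_star_smul_one_add_star_smul, mul_add, Matrix.mul_smul, Matrix.mul_smul, hg, mul_one,
    add_comm]

theorem eq_mul_inv_map_star_of_mul_map_star_eq [Fintype n] {g h : Matrix n n K}
    (hh : IsUnit h.det) (hgh : g * h.map (starRingEnd K) = h) : g = h * (h.map (starRingEnd K))⁻¹ := by
  have hh' : IsUnit (h.map (starRingEnd K)).det := by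
    rw [← RingHom.mapMatrix_apply, ← RingHom.map_det]
    exact hh.map _
  nth_rw 1 [← hgh]
  rw [mul_assoc, mul_nonsing_inv _ hh', mul_one]

end StarRing

end Matrix

open Matrix

/-- Hilbert 90 for `GLₙ(ℂ)/GLₙ(ℝ)`: every `g ∈ GLₙ(ℂ)` with
`g ḡ = I` can be written as `g = h h̄⁻¹` for some `h ∈ GLₙ(ℂ)`. -/
theorem hilbert_90_gl_complex
    (n : ℕ) (g : Matrix (Fin n) (Fin n) ℂ) (hg : IsUnit g.det)
    (hcocycle : g * g.map (starRingEnd ℂ) = 1) :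
    ∃ h : Matrix (Fin n) (Fin n) ℂ, IsUnit h.det ∧
      g = h * (h.map (starRingEnd ℂ))⁻¹ := by
  have hform (t : ℂ) : (1 + g) + t • (Complex.I • (1 - g)) =
      (1 + Complex.I * t) • 1 + (1 - Complex.I * t) • g := by
    simp only [smul_sub, smul_smul, sub_smul, add_smul, one_smul, mul_comm t]
    abel
  have hI : ((1 + g) + Complex.I • (Complex.I • (1 - g))).det ≠ 0 := by
    simpa [hform, Complex.I_mul_I, det_smul] using hg.ne_zero
  obtain ⟨_, ⟨t, rfl⟩, ht⟩ := exists_mem_det_add_smul_ne_zero _ _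
    (Set.infinite_range_of_injective Complex.ofReal_injective) hI
  have hconj : star (1 + Complex.I * t) = 1 - Complex.I * t := by
    simp [sub_eq_add_neg]
  rw [hform, ← hconj] at ht
  exact ⟨_, isUnit_iff_ne_zero.mpr ht, eq_mul_inv_map_star_of_mul_map_star_eq
    (isUnit_iff_ne_zero.mpr ht) (mul_map_star_smul_one_add_star_smul hcocycle _)⟩
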